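/- For fixed v > 0, as μ → -∞ the Rayleigh-normal distribution function Z_v(μ) tends to 0, and as μ → +∞ it tends to 1; hence Z_v is a cumulative distribution function. -/

import Mathlib

/-! For admissible `A`, pointwise AM–GM `√(ab) ≤ (ta + b/t)/2` with the balancing weight `t`
gives `∫_S √(A' N) ≤ √(∫_S A' · ∫_S N)` on any set `S`. On the whole line this bounds every
fidelity by `1`; splitting at `c`, and using `∫_{(c,∞)} A' ≤ 1 - A c ≤ 1 - Φ c`, bounds it by
`√(F_μ c) + √(1 - Φ c)`, where `F_μ` is the CDF of `N(μ, v)`. Conversely, `A = 1 - (1 - Φ)(1 - F_μ)`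
is admissible with `A' ≥ N (1 - Φ)`, so some fidelity is at least `√(1 - Φ c) F_μ c`.
Since `F_μ c → 1` as `μ → -∞` and `F_μ c → 0` as `μ → ∞`, letting `c` be very negative,
resp. very positive, the supremum tends to `1`, resp. `0`. -/

noncomputable def normalPDF (μ v x : ℝ) : ℝ :=
  (Real.sqrt (2 * Real.pi * v))⁻¹ * Real.exp (-(x - μ)^2 / (2 * v))

noncomputable def normalCDF (μ v x : ℝ) : ℝ :=
  ∫ t in Set.Iio x, normalPDF μ v t

/-- The set of fidelities appearing in the definition of the Rayleigh-normal
distribution function: `A` runs over continuously differentiable monotone increasing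
functions with `Φ ≤ A ≤ 1`. -/
noncomputable def RNFidelities (μ v : ℝ) : Set ℝ :=
  {r | ∃ A : ℝ → ℝ, ContDiff ℝ 1 A ∧ Monotone A ∧
    (∀ x, normalCDF 0 1 x ≤ A x) ∧ (∀ x, A x ≤ 1) ∧
    r = ∫ x : ℝ, Real.sqrt (deriv A x * normalPDF μ v x)}

/-- The Rayleigh-normal distribution function `Z_v(μ)`. -/
noncomputable def RayleighNormal (v μ : ℝ) : ℝ :=
  1 - (sSup (RNFidelities μ v))^2

open MeasureTheory Filter Set Topology ProbabilityTheory

section Gaussian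

variable {μ v : ℝ}

lemma continuous_normalPDF (μ v : ℝ) : Continuous (normalPDF μ v) := by
  unfold normalPDF; fun_prop

lemma normalPDF_nonneg (hv : 0 ≤ v) (μ x : ℝ) : 0 ≤ normalPDF μ v x :=
  gaussianPDFReal_nonneg μ ⟨v, hv⟩ x

lemma integrable_normalPDF (hv : 0 ≤ v) (μ : ℝ) : Integrable (normalPDF μ v) :=
  integrable_gaussianPDFReal μ ⟨v, hv⟩

lemma integral_normalPDF (hv : 0 < v) (μ : ℝ) : ∫ x, normalPDF μ v x = 1 :=
  integral_gaussianPDFReal_eq_one μ (v := ⟨v, hv.le⟩) fun h => hv.ne' (congrArg Subtype.val h)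

lemma normalCDF_eq_setIntegral_Iic (μ v c : ℝ) :
    normalCDF μ v c = ∫ x in Iic c, normalPDF μ v x :=
  setIntegral_congr_set Iio_ae_eq_Iic

lemma normalCDF_eq_cdf_gaussianReal (hv : 0 < v) (μ : ℝ) :
    normalCDF μ v = cdf (gaussianReal μ v.toNNReal) := by
  ext c
  rw [cdf_eq_real, measureReal_def, gaussianReal_apply_eq_integral μ (by simpa using hv),
    ENNReal.toReal_ofReal (setIntegral_nonneg measurableSet_Iic fun x _ =>
      gaussianPDFReal_nonneg _ _ x), normalCDF_eq_setIntegral_Iic]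
  simp [gaussianPDFReal, normalPDF, hv.le]

lemma monotone_normalCDF (hv : 0 < v) (μ : ℝ) : Monotone (normalCDF μ v) :=
  normalCDF_eq_cdf_gaussianReal hv μ ▸ monotone_cdf _

lemma normalCDF_nonneg (hv : 0 < v) (μ c : ℝ) : 0 ≤ normalCDF μ v c :=
  normalCDF_eq_cdf_gaussianReal hv μ ▸ cdf_nonneg _ c

lemma normalCDF_le_one (hv : 0 < v) (μ c : ℝ) : normalCDF μ v c ≤ 1 :=
  normalCDF_eq_cdf_gaussianReal hv μ ▸ cdf_le_one _ c

lemma tendsto_normalCDF_atBot (hv : 0 < v) (μ : ℝ) : Tendsto (normalCDF μ v) atBot (𝓝 0) :=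
  normalCDF_eq_cdf_gaussianReal hv μ ▸ tendsto_cdf_atBot _

lemma tendsto_normalCDF_atTop (hv : 0 < v) (μ : ℝ) : Tendsto (normalCDF μ v) atTop (𝓝 1) :=
  normalCDF_eq_cdf_gaussianReal hv μ ▸ tendsto_cdf_atTop _

lemma measureReal_gaussianReal_pos (hv : 0 < v) (μ : ℝ) {s : Set ℝ} (hs : volume s ≠ 0) :
    0 < (gaussianReal μ v.toNNReal).real s :=
  ENNReal.toReal_pos (mt (@gaussianReal_absolutelyContinuous' μ _ (by simpa using hv) s) hs)
    (measure_ne_top _ _)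

lemma normalCDF_pos (hv : 0 < v) (μ c : ℝ) : 0 < normalCDF μ v c := by
  rw [normalCDF_eq_cdf_gaussianReal hv, cdf_eq_real]
  exact measureReal_gaussianReal_pos hv μ (by simp)

lemma normalCDF_lt_one (hv : 0 < v) (μ c : ℝ) : normalCDF μ v c < 1 := by
  have htail := measureReal_gaussianReal_pos hv μ (s := Ioi c) (by simp)
  have hsum := measureReal_union (μ := gaussianReal μ v.toNNReal) (Iic_disjoint_Ioi (le_refl c))
    measurableSet_Ioi
  rw [Iic_union_Ioi, probReal_univ] at hsum
  rw [normalCDF_eq_cdf_gaussianReal hv, cdf_eq_real]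
  linarith

lemma hasDerivAt_normalCDF (hv : 0 ≤ v) (μ x : ℝ) :
    HasDerivAt (normalCDF μ v) (normalPDF μ v x) x := by
  have hF : normalCDF μ v = fun y => normalCDF μ v 0 + ∫ t in (0 : ℝ)..y, normalPDF μ v t := by
    ext y
    rw [normalCDF_eq_setIntegral_Iic, normalCDF_eq_setIntegral_Iic,
      ← intervalIntegral.integral_Iic_sub_Iic (integrable_normalPDF hv μ).integrableOn
        (integrable_normalPDF hv μ).integrableOn]
    ring
  rw [hF]
  exact (intervalIntegral.integral_hasDerivAt_right
    ((continuous_normalPDF μ v).intervalIntegrable 0 x)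
    ((continuous_normalPDF μ v).stronglyMeasurableAtFilter _ _)
    (continuous_normalPDF μ v).continuousAt).const_add _

lemma contDiff_normalCDF (hv : 0 ≤ v) (μ : ℝ) : ContDiff ℝ 1 (normalCDF μ v) := by
  rw [contDiff_one_iff_deriv]
  have hderiv : deriv (normalCDF μ v) = normalPDF μ v :=
    funext fun x => (hasDerivAt_normalCDF hv μ x).deriv
  exact ⟨fun x => (hasDerivAt_normalCDF hv μ x).differentiableAt,
    hderiv ▸ continuous_normalPDF μ v⟩

lemma normalCDF_eq_normalCDF_zero (μ v c : ℝ) : normalCDF μ v c = normalCDF 0 v (c - μ) := by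
  have h := (measurePreserving_sub_right volume μ).setIntegral_preimage_emb
    (MeasurableEquiv.subRight μ).measurableEmbedding (normalPDF 0 v) (Iio (c - μ))
  have hpre : (fun x : ℝ => x - μ) ⁻¹' Iio (c - μ) = Iio c := by
    ext y; simp
  rw [hpre] at h
  rw [normalCDF, normalCDF, ← h]
  exact setIntegral_congr_fun measurableSet_Iio fun x _ => by simp [normalPDF]

lemma tendsto_normalCDF_mean_atBot (hv : 0 < v) (c : ℝ) :
    Tendsto (fun μ => normalCDF μ v c) atBot (𝓝 1) := by
  simp_rw [normalCDF_eq_normalCDF_zero _ v c]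
  exact (tendsto_normalCDF_atTop hv 0).comp
    (tendsto_atTop_add_const_left _ c tendsto_neg_atBot_atTop)

lemma tendsto_normalCDF_mean_atTop (hv : 0 < v) (c : ℝ) :
    Tendsto (fun μ => normalCDF μ v c) atTop (𝓝 0) := by
  simp_rw [normalCDF_eq_normalCDF_zero _ v c]
  exact (tendsto_normalCDF_atBot hv 0).comp
    (tendsto_atBot_add_const_left _ c tendsto_neg_atTop_atBot)

end Gaussian

lemma Monotone.integrable_deriv {A : ℝ → ℝ} {a b : ℝ} (hmono : Monotone A)
    (hA : ContDiff ℝ 1 A) (hbot : Tendsto A atBot (𝓝 a)) (htop : Tendsto A atTop (𝓝 b)) :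
    Integrable (deriv A) := by
  have hA' : Continuous (deriv A) := hA.continuous_deriv le_rfl
  refine integrable_of_intervalIntegral_norm_tendsto (b - a) (fun i => hA'.integrableOn_Ioc)
    tendsto_neg_atTop_atBot tendsto_id ?_
  have hFTC : ∀ i : ℝ, ∫ x in -i..id i, ‖deriv A x‖ = A i - A (-i) := fun i => by
    rw [← intervalIntegral.integral_deriv_eq_sub (fun x _ => (hA.differentiable one_ne_zero) x)
      (hA'.intervalIntegrable _ _)]
    exact intervalIntegral.integral_congr fun x _ => Real.norm_of_nonneg hmono.deriv_nonneg
  simp_rw [hFTC]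
  exact htop.sub (hbot.comp tendsto_neg_atTop_atBot)

lemma Real.sqrt_mul_le_add_div {x y t : ℝ} (hx : 0 ≤ x) (hy : 0 ≤ y) (ht : 0 < t) :
    √(x * y) ≤ (t * x + y / t) / 2 := by
  have hsplit : √(x * y) = √(t * x) * √(y / t) := by
    rw [← Real.sqrt_mul (by positivity)]
    congr 1
    field_simp
  rw [hsplit]
  nlinarith [Real.sq_sqrt (mul_nonneg ht.le hx), Real.sq_sqrt (div_nonneg hy ht.le),
    two_mul_le_add_sq (√(t * x)) (√(y / t))]

section SqrtMul

variable {α : Type*} [MeasurableSpace α] {ν : Measure α} {f g : α → ℝ}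

lemma MeasureTheory.Integrable.sqrt_mul (hf : Integrable f ν) (hg : Integrable g ν) (hf0 : 0 ≤ f)
    (hg0 : 0 ≤ g) : Integrable (fun x => √(f x * g x)) ν := by
  refine ((hf.add hg).div_const 2).mono'
    (Real.continuous_sqrt.comp_aestronglyMeasurable
      (hf.aestronglyMeasurable.mul hg.aestronglyMeasurable)) (ae_of_all _ fun x => ?_)
  rw [Real.norm_of_nonneg (Real.sqrt_nonneg _)]
  simpa using Real.sqrt_mul_le_add_div (hf0 x) (hg0 x) one_pos

lemma integral_sqrt_mul_le {a b : ℝ} (hf : Integrable f ν) (hg : Integrable g ν) (hf0 : 0 ≤ f)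
    (hg0 : 0 ≤ g) (ha : 0 < a) (hb : 0 < b) (hfa : ∫ x, f x ∂ν ≤ a) (hgb : ∫ x, g x ∂ν ≤ b) :
    ∫ x, √(f x * g x) ∂ν ≤ √(a * b) := by
  set t := √b / √a
  have ht : 0 < t := by positivity
  calc ∫ x, √(f x * g x) ∂ν ≤ ∫ x, (t * f x + g x / t) / 2 ∂ν :=
        integral_mono (hf.sqrt_mul hg hf0 hg0) (((hf.const_mul t).add (hg.div_const t)).div_const 2)
          fun x => Real.sqrt_mul_le_add_div (hf0 x) (hg0 x) ht
    _ = (t * ∫ x, f x ∂ν + (∫ x, g x ∂ν) / t) / 2 := by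
        rw [integral_div, integral_add (hf.const_mul t) (hg.div_const t), integral_const_mul,
          integral_div]
    _ ≤ (t * a + b / t) / 2 := by gcongr
    _ = √(a * b) := by
        have ha' := Real.sq_sqrt ha.le
        have hb' := Real.sq_sqrt hb.le
        have : 0 < √a := Real.sqrt_pos.2 ha
        rw [Real.sqrt_mul ha.le]
        simp only [t]
        field_simp
        rw [ha', hb']
        ring

end SqrtMul

structure RNAdmissible (A : ℝ → ℝ) : Prop where
  contDiff : ContDiff ℝ 1 A
  monotone : Monotone A
  normalCDF_le : ∀ x, normalCDF 0 1 x ≤ A x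
  le_one : ∀ x, A x ≤ 1

namespace RNAdmissible

variable {A : ℝ → ℝ}

lemma nonneg (hA : RNAdmissible A) (x : ℝ) : 0 ≤ A x :=
  (normalCDF_nonneg one_pos 0 x).trans (hA.normalCDF_le x)

lemma tendsto_atBot (hA : RNAdmissible A) : Tendsto A atBot (𝓝 (⨅ x, A x)) :=
  tendsto_atBot_ciInf hA.monotone ⟨0, by rintro _ ⟨x, rfl⟩; exact hA.nonneg x⟩

lemma tendsto_atTop (hA : RNAdmissible A) : Tendsto A atTop (𝓝 (⨆ x, A x)) :=
  tendsto_atTop_ciSup hA.monotone ⟨1, by rintro _ ⟨x, rfl⟩; exact hA.le_one x⟩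

lemma hasDerivAt (hA : RNAdmissible A) (x : ℝ) : HasDerivAt A (deriv A x) x :=
  (hA.contDiff.differentiable one_ne_zero x).hasDerivAt

lemma integrable_deriv (hA : RNAdmissible A) : Integrable (deriv A) :=
  hA.monotone.integrable_deriv hA.contDiff hA.tendsto_atBot hA.tendsto_atTop

lemma integral_deriv_le_one (hA : RNAdmissible A) : ∫ x, deriv A x ≤ 1 := by
  rw [integral_of_hasDerivAt_of_tendsto hA.hasDerivAt hA.integrable_deriv hA.tendsto_atBot
    hA.tendsto_atTop]
  linarith [ciSup_le hA.le_one, le_ciInf hA.nonneg]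

lemma setIntegral_Iic_deriv_le_one (hA : RNAdmissible A) (c : ℝ) : ∫ x in Iic c, deriv A x ≤ 1 := by
  rw [integral_Iic_of_hasDerivAt_of_tendsto' (fun x _ => hA.hasDerivAt x)
    hA.integrable_deriv.integrableOn hA.tendsto_atBot]
  linarith [hA.le_one c, le_ciInf hA.nonneg]

lemma setIntegral_Ioi_deriv_le (hA : RNAdmissible A) (c : ℝ) : ∫ x in Ioi c, deriv A x ≤ 1 - normalCDF 0 1 c := by
  rw [integral_Ioi_of_hasDerivAt_of_tendsto' (fun x _ => hA.hasDerivAt x)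
    hA.integrable_deriv.integrableOn hA.tendsto_atTop]
  linarith [hA.normalCDF_le c, ciSup_le hA.le_one]

lemma integrable_sqrt_deriv_mul_normalPDF (hA : RNAdmissible A) {μ v : ℝ} (hv : 0 ≤ v) :
    Integrable (fun x => √(deriv A x * normalPDF μ v x)) :=
  hA.integrable_deriv.sqrt_mul (integrable_normalPDF hv μ) (fun _ => hA.monotone.deriv_nonneg)
    (normalPDF_nonneg hv μ)

end RNAdmissible

lemma mem_RNFidelities_iff {μ v r : ℝ} :
    r ∈ RNFidelities μ v ↔ ∃ A, RNAdmissible A ∧ r = ∫ x, √(deriv A x * normalPDF μ v x) := by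
  constructor
  · rintro ⟨A, h₁, h₂, h₃, h₄, rfl⟩
    exact ⟨A, ⟨h₁, h₂, h₃, h₄⟩, rfl⟩
  · rintro ⟨A, ⟨h₁, h₂, h₃, h₄⟩, rfl⟩
    exact ⟨A, h₁, h₂, h₃, h₄, rfl⟩

section Fidelity

variable {μ v : ℝ}

lemma RNFidelities.le_one (hv : 0 < v) {r : ℝ} (hr : r ∈ RNFidelities μ v) : r ≤ 1 := by
  obtain ⟨A, hA, rfl⟩ := mem_RNFidelities_iff.1 hr
  simpa using integral_sqrt_mul_le hA.integrable_deriv (integrable_normalPDF hv.le μ)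
    (fun _ => hA.monotone.deriv_nonneg) (normalPDF_nonneg hv.le μ) one_pos one_pos
    hA.integral_deriv_le_one (integral_normalPDF hv μ).le

lemma RNFidelities.le_sqrt_add_sqrt (hv : 0 < v) (c : ℝ) {r : ℝ} (hr : r ∈ RNFidelities μ v) :
    r ≤ √(normalCDF μ v c) + √(1 - normalCDF 0 1 c) := by
  obtain ⟨A, hA, rfl⟩ := mem_RNFidelities_iff.1 hr
  have hint := hA.integrable_sqrt_deriv_mul_normalPDF (μ := μ) hv.le
  have hf := integrable_normalPDF hv.le μ
  have hleft : ∫ x in Iic c, √(deriv A x * normalPDF μ v x) ≤ √(1 * normalCDF μ v c) :=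
    integral_sqrt_mul_le hA.integrable_deriv.integrableOn hf.integrableOn
      (fun _ => hA.monotone.deriv_nonneg) (normalPDF_nonneg hv.le μ) one_pos
      (normalCDF_pos hv μ c) (hA.setIntegral_Iic_deriv_le_one c)
      (normalCDF_eq_setIntegral_Iic μ v c).ge
  have hright : ∫ x in Ioi c, √(deriv A x * normalPDF μ v x) ≤ √((1 - normalCDF 0 1 c) * 1) :=
    integral_sqrt_mul_le hA.integrable_deriv.integrableOn hf.integrableOn
      (fun _ => hA.monotone.deriv_nonneg) (normalPDF_nonneg hv.le μ)
      (sub_pos.2 (normalCDF_lt_one one_pos 0 c)) one_pos (hA.setIntegral_Ioi_deriv_le c)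
      ((setIntegral_le_integral hf (ae_of_all _ (normalPDF_nonneg hv.le μ))).trans
        (integral_normalPDF hv μ).le)
  rw [← setIntegral_univ, ← Iic_union_Ioi (a := c),
    setIntegral_union (Iic_disjoint_Ioi le_rfl) measurableSet_Ioi hint.integrableOn
      hint.integrableOn]
  simpa using add_le_add hleft hright

/-- The distribution function of `min X Y` for independent `X ∼ N(0, 1)` and `Y ∼ N(μ, v)`. -/
noncomputable def minNormalCDF (μ v x : ℝ) : ℝ :=
  1 - (1 - normalCDF 0 1 x) * (1 - normalCDF μ v x)

lemma rnAdmissible_minNormalCDF (hv : 0 < v) (μ : ℝ) : RNAdmissible (minNormalCDF μ v) where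
  contDiff := contDiff_const.sub ((contDiff_const.sub (contDiff_normalCDF zero_le_one 0)).mul
    (contDiff_const.sub (contDiff_normalCDF hv.le μ)))
  monotone x y hxy := by
    have := monotone_normalCDF one_pos 0 hxy
    have := monotone_normalCDF hv μ hxy
    have := normalCDF_le_one one_pos 0 y
    have := normalCDF_le_one hv μ y
    unfold minNormalCDF
    gcongr
    all_goals linarith
  normalCDF_le x := by
    have := normalCDF_le_one one_pos 0 x
    have := normalCDF_nonneg hv μ x
    unfold minNormalCDF
    nlinarith
  le_one x := by
    have := normalCDF_le_one one_pos 0 x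
    have := normalCDF_le_one hv μ x
    unfold minNormalCDF
    nlinarith

lemma hasDerivAt_minNormalCDF (hv : 0 ≤ v) (μ x : ℝ) :
    HasDerivAt (minNormalCDF μ v)
      (normalPDF 0 1 x * (1 - normalCDF μ v x) + normalPDF μ v x * (1 - normalCDF 0 1 x)) x := by
  have := (hasDerivAt_const x (1 : ℝ)).sub
    (((hasDerivAt_const x 1).sub (hasDerivAt_normalCDF zero_le_one 0 x)).mul
      ((hasDerivAt_const x 1).sub (hasDerivAt_normalCDF hv μ x)))
  exact this.congr_deriv (by simp only [Pi.sub_apply]; ring)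

lemma normalPDF_mul_sqrt_le (hv : 0 < v) (μ x : ℝ) :
    normalPDF μ v x * √(1 - normalCDF 0 1 x) ≤
      √(deriv (minNormalCDF μ v) x * normalPDF μ v x) := by
  have hf := normalPDF_nonneg hv.le μ x
  have hφ := normalPDF_nonneg zero_le_one 0 x
  have hF := normalCDF_le_one hv μ x
  calc normalPDF μ v x * √(1 - normalCDF 0 1 x)
      = √(normalPDF μ v x ^ 2 * (1 - normalCDF 0 1 x)) := by
        rw [Real.sqrt_mul (sq_nonneg _), Real.sqrt_sq hf]
    _ ≤ √(deriv (minNormalCDF μ v) x * normalPDF μ v x) := by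
        rw [(hasDerivAt_minNormalCDF hv.le μ x).deriv]
        exact Real.sqrt_le_sqrt (by nlinarith [mul_nonneg (mul_nonneg hφ hf) (sub_nonneg.2 hF)])

lemma RNFidelities.exists_ge (hv : 0 < v) (μ c : ℝ) :
    ∃ r ∈ RNFidelities μ v, √(1 - normalCDF 0 1 c) * normalCDF μ v c ≤ r := by
  have hA := rnAdmissible_minNormalCDF hv μ
  refine ⟨_, mem_RNFidelities_iff.2 ⟨_, hA, rfl⟩, ?_⟩
  have hint := hA.integrable_sqrt_deriv_mul_normalPDF (μ := μ) hv.le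
  calc √(1 - normalCDF 0 1 c) * normalCDF μ v c
      = ∫ x in Iic c, normalPDF μ v x * √(1 - normalCDF 0 1 c) := by
        rw [integral_mul_const, normalCDF_eq_setIntegral_Iic μ v c, mul_comm]
    _ ≤ ∫ x in Iic c, √(deriv (minNormalCDF μ v) x * normalPDF μ v x) := by
        refine setIntegral_mono_on ((integrable_normalPDF hv.le μ).integrableOn.mul_const _)
          hint.integrableOn measurableSet_Iic fun x hx => ?_
        refine le_trans ?_ (normalPDF_mul_sqrt_le hv μ x)
        gcongr
        · exact normalPDF_nonneg hv.le μ x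
        · exact monotone_normalCDF one_pos 0 hx
    _ ≤ ∫ x, √(deriv (minNormalCDF μ v) x * normalPDF μ v x) :=
        setIntegral_le_integral hint (ae_of_all _ fun _ => Real.sqrt_nonneg _)

end Fidelity

section Supremum

variable {v : ℝ}

lemma zero_mem_RNFidelities (μ v : ℝ) : (0 : ℝ) ∈ RNFidelities μ v :=
  ⟨fun _ => 1, contDiff_const, monotone_const, normalCDF_le_one one_pos 0, fun _ => le_rfl,
    by simp⟩

lemma bddAbove_RNFidelities (hv : 0 < v) (μ : ℝ) : BddAbove (RNFidelities μ v) :=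
  ⟨1, fun _ => RNFidelities.le_one hv⟩

lemma tendsto_sSup_RNFidelities_atBot (hv : 0 < v) :
    Tendsto (fun μ => sSup (RNFidelities μ v)) atBot (𝓝 1) := by
  refine tendsto_order.2 ⟨fun a ha => ?_, fun a ha => Eventually.of_forall fun μ =>
    (csSup_le ⟨0, zero_mem_RNFidelities μ v⟩ fun _ => RNFidelities.le_one hv).trans_lt ha⟩
  have hsqrt : Tendsto (fun c => √(1 - normalCDF 0 1 c)) atBot (𝓝 1) := by
    simpa using ((tendsto_const_nhds (x := (1 : ℝ))).sub (tendsto_normalCDF_atBot one_pos 0)).sqrt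
  obtain ⟨c, hc⟩ := (hsqrt.eventually (eventually_gt_nhds ha)).exists
  have hlower : Tendsto (fun μ => √(1 - normalCDF 0 1 c) * normalCDF μ v c) atBot
      (𝓝 (√(1 - normalCDF 0 1 c))) := by
    simpa using (tendsto_normalCDF_mean_atBot hv c).const_mul (√(1 - normalCDF 0 1 c))
  filter_upwards [hlower.eventually (eventually_gt_nhds hc)] with μ hμ
  obtain ⟨r, hr, hle⟩ := RNFidelities.exists_ge hv μ c
  exact hμ.trans_le (hle.trans (le_csSup (bddAbove_RNFidelities hv μ) hr))

lemma tendsto_sSup_RNFidelities_atTop (hv : 0 < v) :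
    Tendsto (fun μ => sSup (RNFidelities μ v)) atTop (𝓝 0) := by
  refine tendsto_order.2 ⟨fun a ha => Eventually.of_forall fun μ =>
    ha.trans_le (le_csSup (bddAbove_RNFidelities hv μ) (zero_mem_RNFidelities μ v)),
    fun a ha => ?_⟩
  have hsqrt : Tendsto (fun c => √(1 - normalCDF 0 1 c)) atTop (𝓝 0) := by
    simpa using ((tendsto_const_nhds (x := (1 : ℝ))).sub (tendsto_normalCDF_atTop one_pos 0)).sqrt
  obtain ⟨c, hc⟩ := (hsqrt.eventually (eventually_lt_nhds (half_pos ha))).exists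
  have hleft : Tendsto (fun μ => √(normalCDF μ v c)) atTop (𝓝 0) := by
    simpa using (tendsto_normalCDF_mean_atTop hv c).sqrt
  filter_upwards [hleft.eventually (eventually_lt_nhds (half_pos ha))] with μ hμ
  refine (csSup_le ⟨0, zero_mem_RNFidelities μ v⟩ fun _ => RNFidelities.le_sqrt_add_sqrt hv c)
    |>.trans_lt ?_
  linarith

end Supremum

theorem stmt13 (v : ℝ) (hv : 0 < v) :
    Filter.Tendsto (fun μ => RayleighNormal v μ) Filter.atBot (nhds 0) ∧
    Filter.Tendsto (fun μ => RayleighNormal v μ) Filter.atTop (nhds 1) := by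
  have hZ : ∀ {l : Filter ℝ} {L : ℝ}, Tendsto (fun μ => sSup (RNFidelities μ v)) l (𝓝 L) →
      Tendsto (fun μ => RayleighNormal v μ) l (𝓝 (1 - L ^ 2)) :=
    fun h => tendsto_const_nhds.sub (h.pow 2)
  exact ⟨by simpa using hZ (tendsto_sSup_RNFidelities_atBot hv),
    by simpa using hZ (tendsto_sSup_RNFidelities_atTop hv)⟩
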